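/- arXiv:2104.01915 — 11 statements merged into one kernel-verified Lean document; each statement's English description precedes it below -/
import Mathlib

section
/- If 1 is the neutral element of a bivariate general overlap function GO and GO is idempotent (GO(x,x)=x for all x), then GO is the minimum, i.e., GO(x,y)=min(x,y) for all x,y in [0,1]. -/
open Set

theorem stmt_0
    (GO : ℝ → ℝ → ℝ)
    (hGOmap : ∀ x ∈ Icc (0:ℝ) 1, ∀ y ∈ Icc (0:ℝ) 1, GO x y ∈ Icc (0:ℝ) 1)
    (hGOcomm : ∀ x ∈ Icc (0:ℝ) 1, ∀ y ∈ Icc (0:ℝ) 1, GO x y = GO y x)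
    (hGOmono₁ : ∀ x₁ ∈ Icc (0:ℝ) 1, ∀ x₂ ∈ Icc (0:ℝ) 1, ∀ y ∈ Icc (0:ℝ) 1, x₁ ≤ x₂ → GO x₁ y ≤ GO x₂ y)
    (hGOmono₂ : ∀ x ∈ Icc (0:ℝ) 1, ∀ y₁ ∈ Icc (0:ℝ) 1, ∀ y₂ ∈ Icc (0:ℝ) 1, y₁ ≤ y₂ → GO x y₁ ≤ GO x y₂)
    (hGOcont : ContinuousOn (fun p : ℝ × ℝ => GO p.1 p.2) (Icc (0:ℝ) 1 ×ˢ Icc (0:ℝ) 1))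
    (hGOzero : ∀ x ∈ Icc (0:ℝ) 1, ∀ y ∈ Icc (0:ℝ) 1, x * y = 0 → GO x y = 0)
    (hGOone : ∀ x ∈ Icc (0:ℝ) 1, ∀ y ∈ Icc (0:ℝ) 1, x * y = 1 → GO x y = 1)
    (hneutral : ∀ x ∈ Icc (0:ℝ) 1, GO x 1 = x)
    (hidem : ∀ x ∈ Icc (0:ℝ) 1, GO x x = x) :
    ∀ x ∈ Icc (0:ℝ) 1, ∀ y ∈ Icc (0:ℝ) 1, GO x y = min x y := by
  have key : ∀ x ∈ Icc (0:ℝ) 1, ∀ y ∈ Icc (0:ℝ) 1, x ≤ y → GO x y = x := by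
    intro x hx y hy hxy
    have h1 : GO x x ≤ GO x y := hGOmono₂ x hx x hx y hy hxy
    have h2 : GO x y ≤ GO x 1 := hGOmono₂ x hx y hy 1 (by norm_num) hy.2
    rw [hidem x hx] at h1
    rw [hneutral x hx] at h2
    linarith
  intro x hx y hy
  rcases le_total x y with h | h
  · rw [key x hx y hy h, min_eq_left h]
  · rw [hGOcomm x hx y hy, key y hy x hx h, min_eq_right h]
end

section
/- Let GO be a bivariate general overlap function and N a fuzzy negation. Then the function I(x,y) = N(GO(x, N(y))) is a fuzzy implication: it is decreasing in the first variable, increasing in the second variable, and satisfies I(0,y)=1, I(x,1)=1, and I(1,0)=0. -/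
open Set

theorem stmt_1
    (GO : ℝ → ℝ → ℝ) (N : ℝ → ℝ)
    (hGOmap : ∀ x ∈ Icc (0:ℝ) 1, ∀ y ∈ Icc (0:ℝ) 1, GO x y ∈ Icc (0:ℝ) 1)
    (hGOcomm : ∀ x ∈ Icc (0:ℝ) 1, ∀ y ∈ Icc (0:ℝ) 1, GO x y = GO y x)
    (hGOmono₁ : ∀ x₁ ∈ Icc (0:ℝ) 1, ∀ x₂ ∈ Icc (0:ℝ) 1, ∀ y ∈ Icc (0:ℝ) 1, x₁ ≤ x₂ → GO x₁ y ≤ GO x₂ y)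
    (hGOmono₂ : ∀ x ∈ Icc (0:ℝ) 1, ∀ y₁ ∈ Icc (0:ℝ) 1, ∀ y₂ ∈ Icc (0:ℝ) 1, y₁ ≤ y₂ → GO x y₁ ≤ GO x y₂)
    (hGOcont : ContinuousOn (fun p : ℝ × ℝ => GO p.1 p.2) (Icc (0:ℝ) 1 ×ˢ Icc (0:ℝ) 1))
    (hGOzero : ∀ x ∈ Icc (0:ℝ) 1, ∀ y ∈ Icc (0:ℝ) 1, x * y = 0 → GO x y = 0)
    (hGOone : ∀ x ∈ Icc (0:ℝ) 1, ∀ y ∈ Icc (0:ℝ) 1, x * y = 1 → GO x y = 1)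
    (hNmap : ∀ x ∈ Icc (0:ℝ) 1, N x ∈ Icc (0:ℝ) 1)
    (hNanti : ∀ x ∈ Icc (0:ℝ) 1, ∀ y ∈ Icc (0:ℝ) 1, x ≤ y → N y ≤ N x)
    (hN0 : N 0 = 1) (hN1 : N 1 = 0)
    (I : ℝ → ℝ → ℝ)
    (hI : ∀ x y, I x y = N (GO x (N y))) :
    (∀ x₁ ∈ Icc (0:ℝ) 1, ∀ x₂ ∈ Icc (0:ℝ) 1, ∀ y ∈ Icc (0:ℝ) 1, x₁ ≤ x₂ → I x₂ y ≤ I x₁ y) ∧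
    (∀ x ∈ Icc (0:ℝ) 1, ∀ y₁ ∈ Icc (0:ℝ) 1, ∀ y₂ ∈ Icc (0:ℝ) 1, y₁ ≤ y₂ → I x y₁ ≤ I x y₂) ∧
    (∀ y ∈ Icc (0:ℝ) 1, I 0 y = 1) ∧ (∀ x ∈ Icc (0:ℝ) 1, I x 1 = 1) ∧ I 1 0 = 0 := by
  have h01 : (0:ℝ) ∈ Icc (0:ℝ) 1 := ⟨le_refl 0, zero_le_one⟩
  have h11 : (1:ℝ) ∈ Icc (0:ℝ) 1 := ⟨zero_le_one, le_refl 1⟩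
  refine ⟨?_, ?_, ?_, ?_, ?_⟩
  · intro x₁ hx₁ x₂ hx₂ y hy hle
    rw [hI, hI]
    exact hNanti _ (hGOmap _ hx₁ _ (hNmap _ hy)) _ (hGOmap _ hx₂ _ (hNmap _ hy))
      (hGOmono₁ _ hx₁ _ hx₂ _ (hNmap _ hy) hle)
  · intro x hx y₁ hy₁ y₂ hy₂ hle
    rw [hI, hI]
    exact hNanti _ (hGOmap _ hx _ (hNmap _ hy₂)) _ (hGOmap _ hx _ (hNmap _ hy₁))
      (hGOmono₂ _ hx _ (hNmap _ hy₂) _ (hNmap _ hy₁) (hNanti _ hy₁ _ hy₂ hle))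
  · intro y hy
    rw [hI, hGOzero _ h01 _ (hNmap _ hy) (zero_mul _), hN0]
  · intro x hx
    rw [hI, hN1, hGOzero _ hx _ h01 (mul_zero _), hN0]
  · rw [hI, hN0, hGOone _ h11 _ h11 (one_mul 1), hN1]
end

section
/- If N is a strict fuzzy negation, then the (GO,N)-implication satisfies right contraposition with respect to N^{-1}: I_GO^N(x, N^{-1}(y)) = I_GO^N(y, N^{-1}(x)) for all x,y in [0,1]. -/
open Set

theorem stmt_8
    (GO : ℝ → ℝ → ℝ) (N Ninv : ℝ → ℝ)
    (hGOmap : ∀ x ∈ Icc (0:ℝ) 1, ∀ y ∈ Icc (0:ℝ) 1, GO x y ∈ Icc (0:ℝ) 1)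
    (hGOcomm : ∀ x ∈ Icc (0:ℝ) 1, ∀ y ∈ Icc (0:ℝ) 1, GO x y = GO y x)
    (hGOmono₁ : ∀ x₁ ∈ Icc (0:ℝ) 1, ∀ x₂ ∈ Icc (0:ℝ) 1, ∀ y ∈ Icc (0:ℝ) 1, x₁ ≤ x₂ → GO x₁ y ≤ GO x₂ y)
    (hGOmono₂ : ∀ x ∈ Icc (0:ℝ) 1, ∀ y₁ ∈ Icc (0:ℝ) 1, ∀ y₂ ∈ Icc (0:ℝ) 1, y₁ ≤ y₂ → GO x y₁ ≤ GO x y₂)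
    (hGOcont : ContinuousOn (fun p : ℝ × ℝ => GO p.1 p.2) (Icc (0:ℝ) 1 ×ˢ Icc (0:ℝ) 1))
    (hGOzero : ∀ x ∈ Icc (0:ℝ) 1, ∀ y ∈ Icc (0:ℝ) 1, x * y = 0 → GO x y = 0)
    (hGOone : ∀ x ∈ Icc (0:ℝ) 1, ∀ y ∈ Icc (0:ℝ) 1, x * y = 1 → GO x y = 1)
    (hNmap : ∀ x ∈ Icc (0:ℝ) 1, N x ∈ Icc (0:ℝ) 1)
    (hNanti : ∀ x ∈ Icc (0:ℝ) 1, ∀ y ∈ Icc (0:ℝ) 1, x ≤ y → N y ≤ N x)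
    (hN0 : N 0 = 1) (hN1 : N 1 = 0)
    (hNstrict : ∀ x ∈ Icc (0:ℝ) 1, ∀ y ∈ Icc (0:ℝ) 1, x < y → N y < N x)
    (hNcont : ContinuousOn N (Icc (0:ℝ) 1))
    (hNinvmap : ∀ x ∈ Icc (0:ℝ) 1, Ninv x ∈ Icc (0:ℝ) 1)
    (hNNinv : ∀ x ∈ Icc (0:ℝ) 1, N (Ninv x) = x)
    (hNinvN : ∀ x ∈ Icc (0:ℝ) 1, Ninv (N x) = x)
 :
    ∀ x ∈ Icc (0:ℝ) 1, ∀ y ∈ Icc (0:ℝ) 1, N (GO x (N (Ninv y))) = N (GO y (N (Ninv x))) := by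
  intro x hx y hy
  rw [hNNinv y hy, hNNinv x hx, hGOcomm x hx y hy]
end

section
/- Let N be a strict fuzzy negation, GO a bivariate general overlap function with neutral element 1. If I_GO^N satisfies right contraposition with respect to N, i.e., I_GO^N(x,N(y))=I_GO^N(y,N(x)) for all x,y, then N is strong: N(N(y))=y for all y. -/
open Set

theorem stmt_9
    (GO : ℝ → ℝ → ℝ) (N : ℝ → ℝ)
    (hGOmap : ∀ x ∈ Icc (0:ℝ) 1, ∀ y ∈ Icc (0:ℝ) 1, GO x y ∈ Icc (0:ℝ) 1)
    (hGOcomm : ∀ x ∈ Icc (0:ℝ) 1, ∀ y ∈ Icc (0:ℝ) 1, GO x y = GO y x)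
    (hGOmono₁ : ∀ x₁ ∈ Icc (0:ℝ) 1, ∀ x₂ ∈ Icc (0:ℝ) 1, ∀ y ∈ Icc (0:ℝ) 1, x₁ ≤ x₂ → GO x₁ y ≤ GO x₂ y)
    (hGOmono₂ : ∀ x ∈ Icc (0:ℝ) 1, ∀ y₁ ∈ Icc (0:ℝ) 1, ∀ y₂ ∈ Icc (0:ℝ) 1, y₁ ≤ y₂ → GO x y₁ ≤ GO x y₂)
    (hGOcont : ContinuousOn (fun p : ℝ × ℝ => GO p.1 p.2) (Icc (0:ℝ) 1 ×ˢ Icc (0:ℝ) 1))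
    (hGOzero : ∀ x ∈ Icc (0:ℝ) 1, ∀ y ∈ Icc (0:ℝ) 1, x * y = 0 → GO x y = 0)
    (hGOone : ∀ x ∈ Icc (0:ℝ) 1, ∀ y ∈ Icc (0:ℝ) 1, x * y = 1 → GO x y = 1)
    (hNmap : ∀ x ∈ Icc (0:ℝ) 1, N x ∈ Icc (0:ℝ) 1)
    (hNanti : ∀ x ∈ Icc (0:ℝ) 1, ∀ y ∈ Icc (0:ℝ) 1, x ≤ y → N y ≤ N x)
    (hN0 : N 0 = 1) (hN1 : N 1 = 0)
    (hNstrict : ∀ x ∈ Icc (0:ℝ) 1, ∀ y ∈ Icc (0:ℝ) 1, x < y → N y < N x)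
    (hNcont : ContinuousOn N (Icc (0:ℝ) 1))
    (hneutral : ∀ x ∈ Icc (0:ℝ) 1, GO x 1 = x)
    (hRCP : ∀ x ∈ Icc (0:ℝ) 1, ∀ y ∈ Icc (0:ℝ) 1, N (GO x (N (N y))) = N (GO y (N (N x)))) :
    ∀ y ∈ Icc (0:ℝ) 1, N (N y) = y := by
  have h01 : (1:ℝ) ∈ Icc (0:ℝ) 1 := by constructor <;> norm_num
  have hNinj : ∀ a ∈ Icc (0:ℝ) 1, ∀ b ∈ Icc (0:ℝ) 1, N a = N b → a = b := by
    intro a ha b hb hab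
    rcases lt_trichotomy a b with h | h | h
    · exact absurd hab (ne_of_gt (hNstrict a ha b hb h))
    · exact h
    · exact absurd hab.symm (ne_of_gt (hNstrict b hb a ha h))
  intro y hy
  have hNy := hNmap y hy
  have hNNy := hNmap _ hNy
  have key := hRCP 1 h01 y hy
  rw [hN1, hN0, hneutral y hy] at key
  rw [hGOcomm 1 h01 _ hNNy, hneutral _ hNNy] at key
  exact hNinj _ hNNy _ hy key
end

section
/- Let N be a strong fuzzy negation and GO a bivariate general overlap function. Then I_GO^N satisfies the exchange principle I_GO^N(x, I_GO^N(y,z)) = I_GO^N(y, I_GO^N(x,z)) for all x,y,z if and only if GO is associative. -/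
open Set

theorem stmt_12
    (GO : ℝ → ℝ → ℝ) (N : ℝ → ℝ)
    (hGOmap : ∀ x ∈ Icc (0:ℝ) 1, ∀ y ∈ Icc (0:ℝ) 1, GO x y ∈ Icc (0:ℝ) 1)
    (hGOcomm : ∀ x ∈ Icc (0:ℝ) 1, ∀ y ∈ Icc (0:ℝ) 1, GO x y = GO y x)
    (hGOmono₁ : ∀ x₁ ∈ Icc (0:ℝ) 1, ∀ x₂ ∈ Icc (0:ℝ) 1, ∀ y ∈ Icc (0:ℝ) 1, x₁ ≤ x₂ → GO x₁ y ≤ GO x₂ y)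
    (hGOmono₂ : ∀ x ∈ Icc (0:ℝ) 1, ∀ y₁ ∈ Icc (0:ℝ) 1, ∀ y₂ ∈ Icc (0:ℝ) 1, y₁ ≤ y₂ → GO x y₁ ≤ GO x y₂)
    (hGOcont : ContinuousOn (fun p : ℝ × ℝ => GO p.1 p.2) (Icc (0:ℝ) 1 ×ˢ Icc (0:ℝ) 1))
    (hGOzero : ∀ x ∈ Icc (0:ℝ) 1, ∀ y ∈ Icc (0:ℝ) 1, x * y = 0 → GO x y = 0)
    (hGOone : ∀ x ∈ Icc (0:ℝ) 1, ∀ y ∈ Icc (0:ℝ) 1, x * y = 1 → GO x y = 1)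
    (hNmap : ∀ x ∈ Icc (0:ℝ) 1, N x ∈ Icc (0:ℝ) 1)
    (hNanti : ∀ x ∈ Icc (0:ℝ) 1, ∀ y ∈ Icc (0:ℝ) 1, x ≤ y → N y ≤ N x)
    (hN0 : N 0 = 1) (hN1 : N 1 = 0)
    (hNstrong : ∀ x ∈ Icc (0:ℝ) 1, N (N x) = x) :
    (∀ x ∈ Icc (0:ℝ) 1, ∀ y ∈ Icc (0:ℝ) 1, ∀ z ∈ Icc (0:ℝ) 1,
      N (GO x (N (N (GO y (N z))))) = N (GO y (N (N (GO x (N z)))))) ↔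
    (∀ x ∈ Icc (0:ℝ) 1, ∀ y ∈ Icc (0:ℝ) 1, ∀ z ∈ Icc (0:ℝ) 1, GO (GO x y) z = GO x (GO y z)) := by
  have hNinj : ∀ a ∈ Icc (0:ℝ) 1, ∀ b ∈ Icc (0:ℝ) 1, N a = N b → a = b := by
    intro a ha b hb h
    have := congrArg N h
    rwa [hNstrong a ha, hNstrong b hb] at this
  constructor
  · intro hex
    -- first derive: GO x (GO y w) = GO y (GO x w) for all x y w in Icc
    have key : ∀ x ∈ Icc (0:ℝ) 1, ∀ y ∈ Icc (0:ℝ) 1, ∀ w ∈ Icc (0:ℝ) 1,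
        GO x (GO y w) = GO y (GO x w) := by
      intro x hx y hy w hw
      have hz := hex x hx y hy (N w) (hNmap w hw)
      rw [hNstrong w hw] at hz
      rw [hNstrong _ (hGOmap y hy w hw), hNstrong _ (hGOmap x hx w hw)] at hz
      exact hNinj _ (hGOmap x hx _ (hGOmap y hy w hw)) _ (hGOmap y hy _ (hGOmap x hx w hw)) hz
    intro x hx y hy z hz
    have hxy := hGOmap x hx y hy
    calc GO (GO x y) z = GO z (GO x y) := hGOcomm _ hxy _ hz
      _ = GO z (GO y x) := by rw [hGOcomm x hx y hy]
      _ = GO y (GO z x) := key z hz y hy x hx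
      _ = GO y (GO x z) := by rw [hGOcomm z hz x hx]
      _ = GO x (GO y z) := (key x hx y hy z hz).symm
  · intro hassoc x hx y hy z hz
    have hNz := hNmap z hz
    rw [hNstrong _ (hGOmap y hy _ hNz), hNstrong _ (hGOmap x hx _ hNz)]
    congr 1
    calc GO x (GO y (N z)) = GO (GO x y) (N z) := (hassoc x hx y hy _ hNz).symm
      _ = GO (GO y x) (N z) := by rw [hGOcomm x hx y hy]
      _ = GO y (GO x (N z)) := hassoc y hy x hx _ hNz
end

section
/- Let GO be a bivariate general overlap function satisfying the converse zero condition (GO(x,y)=0 implies xy=0) and let N be a frontier fuzzy negation. Then I_GO^N satisfies the exchange principle for 1: if I_GO^N(x, I_GO^N(y,z)) = 1 then I_GO^N(y, I_GO^N(x,z)) = 1, for all x,y,z in [0,1]. -/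
open Set

theorem stmt_13
    (GO : ℝ → ℝ → ℝ) (N : ℝ → ℝ)
    (hGOmap : ∀ x ∈ Icc (0:ℝ) 1, ∀ y ∈ Icc (0:ℝ) 1, GO x y ∈ Icc (0:ℝ) 1)
    (hGOcomm : ∀ x ∈ Icc (0:ℝ) 1, ∀ y ∈ Icc (0:ℝ) 1, GO x y = GO y x)
    (hGOmono₁ : ∀ x₁ ∈ Icc (0:ℝ) 1, ∀ x₂ ∈ Icc (0:ℝ) 1, ∀ y ∈ Icc (0:ℝ) 1, x₁ ≤ x₂ → GO x₁ y ≤ GO x₂ y)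
    (hGOmono₂ : ∀ x ∈ Icc (0:ℝ) 1, ∀ y₁ ∈ Icc (0:ℝ) 1, ∀ y₂ ∈ Icc (0:ℝ) 1, y₁ ≤ y₂ → GO x y₁ ≤ GO x y₂)
    (hGOcont : ContinuousOn (fun p : ℝ × ℝ => GO p.1 p.2) (Icc (0:ℝ) 1 ×ˢ Icc (0:ℝ) 1))
    (hGOzero : ∀ x ∈ Icc (0:ℝ) 1, ∀ y ∈ Icc (0:ℝ) 1, x * y = 0 → GO x y = 0)
    (hGOone : ∀ x ∈ Icc (0:ℝ) 1, ∀ y ∈ Icc (0:ℝ) 1, x * y = 1 → GO x y = 1)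
    (hNmap : ∀ x ∈ Icc (0:ℝ) 1, N x ∈ Icc (0:ℝ) 1)
    (hNanti : ∀ x ∈ Icc (0:ℝ) 1, ∀ y ∈ Icc (0:ℝ) 1, x ≤ y → N y ≤ N x)
    (hN0 : N 0 = 1) (hN1 : N 1 = 0)
    (hGOzero' : ∀ x ∈ Icc (0:ℝ) 1, ∀ y ∈ Icc (0:ℝ) 1, GO x y = 0 → x = 0 ∨ y = 0)
    (hNfrontier : ∀ x ∈ Icc (0:ℝ) 1, (N x = 0 ∨ N x = 1) ↔ (x = 0 ∨ x = 1)) :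
    ∀ x ∈ Icc (0:ℝ) 1, ∀ y ∈ Icc (0:ℝ) 1, ∀ z ∈ Icc (0:ℝ) 1,
      N (GO x (N (N (GO y (N z))))) = 1 → N (GO y (N (N (GO x (N z))))) = 1 := by
  have h01 : (0:ℝ) ∈ Icc (0:ℝ) 1 := by norm_num
  have h11 : (1:ℝ) ∈ Icc (0:ℝ) 1 := by norm_num
  -- N a = 1 forces a = 0
  have hNone : ∀ a ∈ Icc (0:ℝ) 1, N a = 1 → a = 0 := by
    intro a ha h
    rcases (hNfrontier a ha).1 (Or.inr h) with h0 | h1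
    · exact h0
    · rw [h1, hN1] at h; norm_num at h
  -- N a = 0 forces a = 1
  have hNzero : ∀ a ∈ Icc (0:ℝ) 1, N a = 0 → a = 1 := by
    intro a ha h
    rcases (hNfrontier a ha).1 (Or.inl h) with h0 | h1
    · rw [h0, hN0] at h; norm_num at h
    · exact h1
  intro x hx y hy z hz h
  have hNz := hNmap z hz
  have hGyNz := hGOmap y hy (N z) hNz
  have hNGyNz := hNmap _ hGyNz
  have hNNGyNz := hNmap _ hNGyNz
  have hGxNz := hGOmap x hx (N z) hNz
  have hNGxNz := hNmap _ hGxNz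
  have hNNGxNz := hNmap _ hNGxNz
  have hbig := hGOmap x hx _ hNNGyNz
  have hkey : GO x (N (N (GO y (N z)))) = 0 := hNone _ hbig h
  have hgoal0 : GO y (N (N (GO x (N z)))) = 0 := by
    rcases hGOzero' x hx _ hNNGyNz hkey with hx0 | hmid
    · -- x = 0 : GO x (N z) = 0, so N (N (GO x (N z))) = N 1 = 0
      have : GO x (N z) = 0 := hGOzero x hx _ hNz (by rw [hx0]; ring)
      rw [this, hN0, hN1]
      exact hGOzero y hy 0 h01 (by ring)
    · -- N (N (GO y (N z))) = 0 ⇒ N (GO y (N z)) = 1 ⇒ GO y (N z) = 0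
      have h1 : N (GO y (N z)) = 1 := hNzero _ hNGyNz hmid
      have h2 : GO y (N z) = 0 := hNone _ hGyNz h1
      rcases hGOzero' y hy _ hNz h2 with hy0 | hz0
      · exact hGOzero y hy _ hNNGxNz (by rw [hy0]; ring)
      · -- N z = 0
        have : GO x (N z) = 0 := hGOzero x hx _ hNz (by rw [hz0]; ring)
        rw [this, hN0, hN1]
        exact hGOzero y hy 0 h01 (by ring)
  rw [hgoal0, hN0]
end

section
/- Let N be a strict fuzzy negation and GO a bivariate general overlap function with neutral element 1. If I_GO^N satisfies the iterative Boolean law I_GO^N(x, I_GO^N(x,y)) = I_GO^N(x,y) for all x,y, then N is strong and GO is idempotent (GO(x,x)=x for all x). -/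
open Set

theorem stmt_14
    (GO : ℝ → ℝ → ℝ) (N : ℝ → ℝ)
    (hGOmap : ∀ x ∈ Icc (0:ℝ) 1, ∀ y ∈ Icc (0:ℝ) 1, GO x y ∈ Icc (0:ℝ) 1)
    (hGOcomm : ∀ x ∈ Icc (0:ℝ) 1, ∀ y ∈ Icc (0:ℝ) 1, GO x y = GO y x)
    (hGOmono₁ : ∀ x₁ ∈ Icc (0:ℝ) 1, ∀ x₂ ∈ Icc (0:ℝ) 1, ∀ y ∈ Icc (0:ℝ) 1, x₁ ≤ x₂ → GO x₁ y ≤ GO x₂ y)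
    (hGOmono₂ : ∀ x ∈ Icc (0:ℝ) 1, ∀ y₁ ∈ Icc (0:ℝ) 1, ∀ y₂ ∈ Icc (0:ℝ) 1, y₁ ≤ y₂ → GO x y₁ ≤ GO x y₂)
    (hGOcont : ContinuousOn (fun p : ℝ × ℝ => GO p.1 p.2) (Icc (0:ℝ) 1 ×ˢ Icc (0:ℝ) 1))
    (hGOzero : ∀ x ∈ Icc (0:ℝ) 1, ∀ y ∈ Icc (0:ℝ) 1, x * y = 0 → GO x y = 0)
    (hGOone : ∀ x ∈ Icc (0:ℝ) 1, ∀ y ∈ Icc (0:ℝ) 1, x * y = 1 → GO x y = 1)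
    (hNmap : ∀ x ∈ Icc (0:ℝ) 1, N x ∈ Icc (0:ℝ) 1)
    (hNanti : ∀ x ∈ Icc (0:ℝ) 1, ∀ y ∈ Icc (0:ℝ) 1, x ≤ y → N y ≤ N x)
    (hN0 : N 0 = 1) (hN1 : N 1 = 0)
    (hNstrict : ∀ x ∈ Icc (0:ℝ) 1, ∀ y ∈ Icc (0:ℝ) 1, x < y → N y < N x)
    (hNcont : ContinuousOn N (Icc (0:ℝ) 1))
    (hneutral : ∀ x ∈ Icc (0:ℝ) 1, GO x 1 = x)
    (hIB : ∀ x ∈ Icc (0:ℝ) 1, ∀ y ∈ Icc (0:ℝ) 1,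
      N (GO x (N (N (GO x (N y))))) = N (GO x (N y))) :
    (∀ x ∈ Icc (0:ℝ) 1, N (N x) = x) ∧ (∀ x ∈ Icc (0:ℝ) 1, GO x x = x) := by
  have one_mem : (1:ℝ) ∈ Icc (0:ℝ) 1 := ⟨zero_le_one, le_refl 1⟩
  have zero_mem : (0:ℝ) ∈ Icc (0:ℝ) 1 := ⟨le_refl 0, zero_le_one⟩
  have hinj : ∀ a ∈ Icc (0:ℝ) 1, ∀ b ∈ Icc (0:ℝ) 1, N a = N b → a = b := by
    intro a ha b hb h
    rcases lt_trichotomy a b with hlt | heq | hgt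
    · exact absurd h (ne_of_gt (hNstrict a ha b hb hlt))
    · exact heq
    · exact absurd h (ne_of_lt (hNstrict b hb a ha hgt))
  have hGO1 : ∀ z ∈ Icc (0:ℝ) 1, GO 1 z = z := by
    intro z hz
    rw [hGOcomm 1 one_mem z hz, hneutral z hz]
  have hNN : ∀ x ∈ Icc (0:ℝ) 1, N (N x) = x := by
    intro y hy
    have hNy := hNmap y hy
    have hNNy := hNmap _ hNy
    have hNNNy := hNmap _ hNNy
    have h := hIB 1 one_mem y hy
    rw [hGO1 _ hNy, hGO1 _ hNNNy] at h
    exact hinj _ hNNy _ hy (hinj _ hNNNy _ hNy h)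
  refine ⟨hNN, ?_⟩
  intro x hx
  have h := hIB x hx 0 zero_mem
  rw [hN0, hneutral x hx, hNN x hx] at h
  exact hinj _ (hGOmap x hx x hx) _ hx h
end

section
/- Let N be a strict fuzzy negation and GO a bivariate general overlap function with neutral element 1. If I_GO^N satisfies the iterative Boolean law I_GO^N(x, I_GO^N(x,y)) = I_GO^N(x,y) for all x,y, then GO(x,y)=min(x,y) for all x,y. -/
open Set

theorem stmt_15
    (GO : ℝ → ℝ → ℝ) (N : ℝ → ℝ)
    (hGOmap : ∀ x ∈ Icc (0:ℝ) 1, ∀ y ∈ Icc (0:ℝ) 1, GO x y ∈ Icc (0:ℝ) 1)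
    (hGOcomm : ∀ x ∈ Icc (0:ℝ) 1, ∀ y ∈ Icc (0:ℝ) 1, GO x y = GO y x)
    (hGOmono₁ : ∀ x₁ ∈ Icc (0:ℝ) 1, ∀ x₂ ∈ Icc (0:ℝ) 1, ∀ y ∈ Icc (0:ℝ) 1, x₁ ≤ x₂ → GO x₁ y ≤ GO x₂ y)
    (hGOmono₂ : ∀ x ∈ Icc (0:ℝ) 1, ∀ y₁ ∈ Icc (0:ℝ) 1, ∀ y₂ ∈ Icc (0:ℝ) 1, y₁ ≤ y₂ → GO x y₁ ≤ GO x y₂)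
    (hGOcont : ContinuousOn (fun p : ℝ × ℝ => GO p.1 p.2) (Icc (0:ℝ) 1 ×ˢ Icc (0:ℝ) 1))
    (hGOzero : ∀ x ∈ Icc (0:ℝ) 1, ∀ y ∈ Icc (0:ℝ) 1, x * y = 0 → GO x y = 0)
    (hGOone : ∀ x ∈ Icc (0:ℝ) 1, ∀ y ∈ Icc (0:ℝ) 1, x * y = 1 → GO x y = 1)
    (hNmap : ∀ x ∈ Icc (0:ℝ) 1, N x ∈ Icc (0:ℝ) 1)
    (hNanti : ∀ x ∈ Icc (0:ℝ) 1, ∀ y ∈ Icc (0:ℝ) 1, x ≤ y → N y ≤ N x)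
    (hN0 : N 0 = 1) (hN1 : N 1 = 0)
    (hNstrict : ∀ x ∈ Icc (0:ℝ) 1, ∀ y ∈ Icc (0:ℝ) 1, x < y → N y < N x)
    (hNcont : ContinuousOn N (Icc (0:ℝ) 1))
    (hneutral : ∀ x ∈ Icc (0:ℝ) 1, GO x 1 = x)
    (hIB : ∀ x ∈ Icc (0:ℝ) 1, ∀ y ∈ Icc (0:ℝ) 1,
      N (GO x (N (N (GO x (N y))))) = N (GO x (N y))) :
    ∀ x ∈ Icc (0:ℝ) 1, ∀ y ∈ Icc (0:ℝ) 1, GO x y = min x y := by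
  have h01 : (0:ℝ) ≤ 1 := zero_le_one
  have h0m : (0:ℝ) ∈ Icc (0:ℝ) 1 := ⟨le_refl 0, h01⟩
  have h1m : (1:ℝ) ∈ Icc (0:ℝ) 1 := ⟨h01, le_refl 1⟩
  -- injectivity of N on [0,1]
  have hNinj : ∀ a ∈ Icc (0:ℝ) 1, ∀ b ∈ Icc (0:ℝ) 1, N a = N b → a = b := by
    intro a ha b hb h
    rcases lt_trichotomy a b with h' | h' | h'
    · exact absurd h (ne_of_lt (hNstrict a ha b hb h')).symm
    · exact h'
    · exact absurd h (ne_of_lt (hNstrict b hb a ha h'))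
  -- surjectivity of N onto [0,1]
  have hNsurj : ∀ y ∈ Icc (0:ℝ) 1, ∃ u ∈ Icc (0:ℝ) 1, N u = y := by
    intro y hy
    have := intermediate_value_Icc' h01 hNcont
    rw [hN0, hN1] at this
    obtain ⟨u, hu, hu'⟩ := this hy
    exact ⟨u, hu, hu'⟩
  -- key equation : GO x (N (N (GO x y))) = GO x y
  have key : ∀ x ∈ Icc (0:ℝ) 1, ∀ y ∈ Icc (0:ℝ) 1,
      GO x (N (N (GO x y))) = GO x y := by
    intro x hx y hy
    obtain ⟨u, hu, huy⟩ := hNsurj y hy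
    have h := hIB x hx u hu
    rw [huy] at h
    have hm1 : GO x y ∈ Icc (0:ℝ) 1 := hGOmap x hx y hy
    have hm2 : GO x (N (N (GO x y))) ∈ Icc (0:ℝ) 1 :=
      hGOmap x hx _ (hNmap _ (hNmap _ hm1))
    exact hNinj _ hm2 _ hm1 h
  -- GO 1 y = y
  have hone : ∀ y ∈ Icc (0:ℝ) 1, GO 1 y = y := by
    intro y hy
    rw [hGOcomm 1 h1m y hy, hneutral y hy]
  -- N ∘ N = id on [0,1]
  have hNN : ∀ y ∈ Icc (0:ℝ) 1, N (N y) = y := by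
    intro y hy
    have h := key 1 h1m y hy
    rw [hone y hy] at h
    rw [hone _ (hNmap _ (hNmap _ hy))] at h
    exact h
  -- idempotence on range : GO x (GO x y) = GO x y
  have key2 : ∀ x ∈ Icc (0:ℝ) 1, ∀ y ∈ Icc (0:ℝ) 1, GO x (GO x y) = GO x y := by
    intro x hx y hy
    have h := key x hx y hy
    rw [hNN _ (hGOmap x hx y hy)] at h
    exact h
  -- GO x z = z when z ≤ x
  have hle : ∀ x ∈ Icc (0:ℝ) 1, ∀ z ∈ Icc (0:ℝ) 1, z ≤ x → GO x z = z := by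
    intro x hx z hz hzx
    have hc : ContinuousOn (fun y => GO x y) (Icc (0:ℝ) 1) := by
      have : ContinuousOn (fun y : ℝ => (x, y)) (Icc (0:ℝ) 1) :=
        (Continuous.prodMk_right x).continuousOn
      exact hGOcont.comp this (fun y hy => ⟨hx, hy⟩)
    have hsub := intermediate_value_Icc h01 hc
    have h0 : GO x 0 = 0 := hGOzero x hx 0 h0m (mul_zero x)
    have h1 : GO x 1 = x := hneutral x hx
    rw [h0, h1] at hsub
    obtain ⟨y, hy, hyz⟩ := hsub ⟨hz.1, hzx⟩
    simp only [] at hyz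
    have := key2 x hx y hy
    rw [hyz] at this
    exact this
  intro x hx y hy
  rcases le_total y x with h | h
  · rw [min_eq_right h]
    exact hle x hx y hy h
  · rw [min_eq_left h]
    have hxx : GO x x = x := hle x hx x hx le_rfl
    have hub : GO x y ≤ x := by
      have := hGOmono₂ x hx y hy 1 h1m hy.2
      rwa [hneutral x hx] at this
    have hlb : x ≤ GO x y := by
      have := hGOmono₂ x hx x hx y hy h
      rwa [hxx] at this
    exact le_antisymm hub hlb
end

section
/- Let GO be a bivariate general overlap function with neutral element 1 and N a crisp fuzzy negation. Then I_GO^N satisfies the identity principle: I_GO^N(x,x)=1 for all x in [0,1]. -/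
open Set

theorem stmt_16
    (GO : ℝ → ℝ → ℝ) (N : ℝ → ℝ)
    (hGOmap : ∀ x ∈ Icc (0:ℝ) 1, ∀ y ∈ Icc (0:ℝ) 1, GO x y ∈ Icc (0:ℝ) 1)
    (hGOcomm : ∀ x ∈ Icc (0:ℝ) 1, ∀ y ∈ Icc (0:ℝ) 1, GO x y = GO y x)
    (hGOmono₁ : ∀ x₁ ∈ Icc (0:ℝ) 1, ∀ x₂ ∈ Icc (0:ℝ) 1, ∀ y ∈ Icc (0:ℝ) 1, x₁ ≤ x₂ → GO x₁ y ≤ GO x₂ y)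
    (hGOmono₂ : ∀ x ∈ Icc (0:ℝ) 1, ∀ y₁ ∈ Icc (0:ℝ) 1, ∀ y₂ ∈ Icc (0:ℝ) 1, y₁ ≤ y₂ → GO x y₁ ≤ GO x y₂)
    (hGOcont : ContinuousOn (fun p : ℝ × ℝ => GO p.1 p.2) (Icc (0:ℝ) 1 ×ˢ Icc (0:ℝ) 1))
    (hGOzero : ∀ x ∈ Icc (0:ℝ) 1, ∀ y ∈ Icc (0:ℝ) 1, x * y = 0 → GO x y = 0)
    (hGOone : ∀ x ∈ Icc (0:ℝ) 1, ∀ y ∈ Icc (0:ℝ) 1, x * y = 1 → GO x y = 1)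
    (hNmap : ∀ x ∈ Icc (0:ℝ) 1, N x ∈ Icc (0:ℝ) 1)
    (hNanti : ∀ x ∈ Icc (0:ℝ) 1, ∀ y ∈ Icc (0:ℝ) 1, x ≤ y → N y ≤ N x)
    (hN0 : N 0 = 1) (hN1 : N 1 = 0)
    (hneutral : ∀ x ∈ Icc (0:ℝ) 1, GO x 1 = x)
    (hNcrisp : ∀ x ∈ Icc (0:ℝ) 1, N x = 0 ∨ N x = 1) :
    ∀ x ∈ Icc (0:ℝ) 1, N (GO x (N x)) = 1 := by
  intro x hx
  rcases hNcrisp x hx with h0 | h1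
  · rw [h0, hGOzero x hx 0 ⟨le_refl 0, zero_le_one⟩ (mul_zero x), hN0]
  · rw [h1, hneutral x hx, h1]
end

section
/- Let GO be a bivariate general overlap function with neutral element 1 and N a crisp fuzzy negation. Then I_GO^N satisfies the law of contraposition with respect to N: I_GO^N(x,y) = I_GO^N(N(y), N(x)) for all x,y in [0,1]. -/
open Set

theorem stmt_17
    (GO : ℝ → ℝ → ℝ) (N : ℝ → ℝ)
    (hGOmap : ∀ x ∈ Icc (0:ℝ) 1, ∀ y ∈ Icc (0:ℝ) 1, GO x y ∈ Icc (0:ℝ) 1)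
    (hGOcomm : ∀ x ∈ Icc (0:ℝ) 1, ∀ y ∈ Icc (0:ℝ) 1, GO x y = GO y x)
    (hGOmono₁ : ∀ x₁ ∈ Icc (0:ℝ) 1, ∀ x₂ ∈ Icc (0:ℝ) 1, ∀ y ∈ Icc (0:ℝ) 1, x₁ ≤ x₂ → GO x₁ y ≤ GO x₂ y)
    (hGOmono₂ : ∀ x ∈ Icc (0:ℝ) 1, ∀ y₁ ∈ Icc (0:ℝ) 1, ∀ y₂ ∈ Icc (0:ℝ) 1, y₁ ≤ y₂ → GO x y₁ ≤ GO x y₂)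
    (hGOcont : ContinuousOn (fun p : ℝ × ℝ => GO p.1 p.2) (Icc (0:ℝ) 1 ×ˢ Icc (0:ℝ) 1))
    (hGOzero : ∀ x ∈ Icc (0:ℝ) 1, ∀ y ∈ Icc (0:ℝ) 1, x * y = 0 → GO x y = 0)
    (hGOone : ∀ x ∈ Icc (0:ℝ) 1, ∀ y ∈ Icc (0:ℝ) 1, x * y = 1 → GO x y = 1)
    (hNmap : ∀ x ∈ Icc (0:ℝ) 1, N x ∈ Icc (0:ℝ) 1)
    (hNanti : ∀ x ∈ Icc (0:ℝ) 1, ∀ y ∈ Icc (0:ℝ) 1, x ≤ y → N y ≤ N x)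
    (hN0 : N 0 = 1) (hN1 : N 1 = 0)
    (hneutral : ∀ x ∈ Icc (0:ℝ) 1, GO x 1 = x)
    (hNcrisp : ∀ x ∈ Icc (0:ℝ) 1, N x = 0 ∨ N x = 1) :
    ∀ x ∈ Icc (0:ℝ) 1, ∀ y ∈ Icc (0:ℝ) 1, N (GO x (N y)) = N (GO (N y) (N (N x))) := by
  intro x hx y hy
  have h01 : (0:ℝ) ∈ Icc (0:ℝ) 1 := by constructor <;> norm_num
  have h11 : (1:ℝ) ∈ Icc (0:ℝ) 1 := by constructor <;> norm_num
  rcases hNcrisp y hy with hNy | hNy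
  · rw [hNy]
    rw [hGOzero x hx 0 h01 (by ring), hGOzero 0 h01 _ (hNmap _ (hNmap x hx)) (by ring)]
  · rw [hNy]
    rw [hneutral x hx]
    rcases hNcrisp x hx with hNx | hNx
    · rw [hNx, hN0, hGOone 1 h11 1 h11 (by ring), hN1]
    · rw [hNx, hN1, hGOzero 1 h11 0 h01 (by ring), hN0]
end

section
/- Let I be a fuzzy implication. If I(x,y)=G(N(x),y) for all x,y in [0,1], for some grouping function G and fuzzy negation N, then the range of I equals [0,1]. -/
open Set

theorem stmt_19
    (G : ℝ → ℝ → ℝ) (N : ℝ → ℝ) (I : ℝ → ℝ → ℝ)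
    (hGmap : ∀ x ∈ Icc (0:ℝ) 1, ∀ y ∈ Icc (0:ℝ) 1, G x y ∈ Icc (0:ℝ) 1)
    (hGcomm : ∀ x ∈ Icc (0:ℝ) 1, ∀ y ∈ Icc (0:ℝ) 1, G x y = G y x)
    (hGmono : ∀ x₁ ∈ Icc (0:ℝ) 1, ∀ x₂ ∈ Icc (0:ℝ) 1, ∀ y ∈ Icc (0:ℝ) 1, x₁ ≤ x₂ → G x₁ y ≤ G x₂ y)
    (hGcont : ContinuousOn (fun p : ℝ × ℝ => G p.1 p.2) (Icc (0:ℝ) 1 ×ˢ Icc (0:ℝ) 1))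
    (hGzero : ∀ x ∈ Icc (0:ℝ) 1, ∀ y ∈ Icc (0:ℝ) 1, (G x y = 0 ↔ x = 0 ∧ y = 0))
    (hGone : ∀ x ∈ Icc (0:ℝ) 1, ∀ y ∈ Icc (0:ℝ) 1, (G x y = 1 ↔ x = 1 ∨ y = 1))
    (hNmap : ∀ x ∈ Icc (0:ℝ) 1, N x ∈ Icc (0:ℝ) 1)
    (hNanti : ∀ x ∈ Icc (0:ℝ) 1, ∀ y ∈ Icc (0:ℝ) 1, x ≤ y → N y ≤ N x)
    (hN0 : N 0 = 1) (hN1 : N 1 = 0)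
    (hI : ∀ x ∈ Icc (0:ℝ) 1, ∀ y ∈ Icc (0:ℝ) 1, I x y = G (N x) y) :
    ∀ t ∈ Icc (0:ℝ) 1, ∃ x ∈ Icc (0:ℝ) 1, ∃ y ∈ Icc (0:ℝ) 1, I x y = t := by
  intro t ht
  have h0 : (0:ℝ) ∈ Icc (0:ℝ) 1 := by norm_num
  have h1 : (1:ℝ) ∈ Icc (0:ℝ) 1 := by norm_num
  -- f y = G 0 y is continuous on [0,1]
  have hf : ContinuousOn (fun y : ℝ => G 0 y) (Icc (0:ℝ) 1) := by
    have : ContinuousOn (fun y : ℝ => ((0:ℝ), y)) (Icc (0:ℝ) 1) :=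
      (continuous_const.prodMk continuous_id).continuousOn
    exact hGcont.comp this (fun y hy => ⟨h0, hy⟩)
  have hG00 : G 0 0 = 0 := (hGzero 0 h0 0 h0).mpr ⟨rfl, rfl⟩
  have hG01 : G 0 1 = 1 := (hGone 0 h0 1 h1).mpr (Or.inr rfl)
  have hsub : Icc (G 0 0) (G 0 1) ⊆ (fun y => G 0 y) '' Icc (0:ℝ) 1 :=
    intermediate_value_Icc (by norm_num) hf
  have htmem : t ∈ Icc (G 0 0) (G 0 1) := by rw [hG00, hG01]; exact ht
  obtain ⟨y, hy, hyt⟩ := hsub htmem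
  refine ⟨1, h1, y, hy, ?_⟩
  rw [hI 1 h1 y hy, hN1]; exact hyt
end
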